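/- Let C = ⟨g_1(x)⟩ be the cyclic code of length n = p^k over R = F[u]/⟨u⁴⟩ generated by g_1(x) = u(x−1)^{r_1} + u²(x−1)^{k_4}p_4(x) + u³(x−1)^{k_5}p_5(x), where 0 ≤ k_4, k_5 < r_1 < n and p_4(x), p_5(x) are units or zero in F[x]/⟨xⁿ − 1⟩. Suppose n − r_1 + k_4 ≥ r_1. Write u³((x−1)^{n−2r_1+2k_4}p_4(x)² − (x−1)^{n−r_1+k_5}p_5(x)) = u³(x−1)^{τ_1}·h̃_1(x) with h̃_1(x) a unit or zero in F[x]/⟨xⁿ − 1⟩ and τ_1 ≥ 0. Then the third torsional degree of C is t_3 = min{r_1, τ_1} if h̃_1(x) is a unit, and t_3 = r_1 if h̃_1(x) = 0. -/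

import Mathlib

open Polynomial
open scoped Classical

noncomputable section

/-- The ring `R = F[u]/⟨u⁴⟩`. -/
abbrev Rq (F : Type) [Field F] : Type :=
  Polynomial F ⧸ Ideal.span ({X ^ 4} : Set (Polynomial F))

instance instCommRingRq (F : Type) [Field F] : CommRing (Rq F) :=
  Ideal.Quotient.commRing _

/-- The ring `S = R[x]/⟨xⁿ − 1⟩`. -/
abbrev Sq (F : Type) [Field F] (n : ℕ) : Type :=
  Polynomial (Rq F) ⧸ Ideal.span ({X ^ n - 1} : Set (Polynomial (Rq F)))

/-- The ring `Q = F[x]/⟨xⁿ − 1⟩`. -/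
abbrev Qq (F : Type) [Field F] (n : ℕ) : Type :=
  Polynomial F ⧸ Ideal.span ({X ^ n - 1} : Set (Polynomial F))

/-- The element `u` of `R`. -/
def uu (F : Type) [Field F] : Rq F := Ideal.Quotient.mk _ X

/-- The element `u` of `S`. -/
def uS (F : Type) [Field F] (n : ℕ) : Sq F n := Ideal.Quotient.mk _ (C (uu F))

/-- The element `x` of `S`. -/
def xS (F : Type) [Field F] (n : ℕ) : Sq F n := Ideal.Quotient.mk _ X

/-- The element `x` of `Q`. -/
def xQ (F : Type) [Field F] (n : ℕ) : Qq F n := Ideal.Quotient.mk _ X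

/-- Reduction `R → F` modulo `u`. -/
def resHom (F : Type) [Field F] : Rq F →+* F :=
  Ideal.Quotient.lift _ (evalRingHom 0) (by
    intro a ha
    rw [Ideal.mem_span_singleton] at ha
    obtain ⟨c, rfl⟩ := ha
    simp)

/-- Reduction `μ : S → Q` modulo `u`. -/
def muHom (F : Type) [Field F] (n : ℕ) : Sq F n →+* Qq F n :=
  Ideal.Quotient.lift _ ((Ideal.Quotient.mk _).comp (mapRingHom (resHom F))) (by
    intro a ha
    rw [Ideal.mem_span_singleton] at ha
    obtain ⟨c, rfl⟩ := ha
    rw [RingHom.comp_apply, map_mul, Ideal.Quotient.eq_zero_iff_mem]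
    apply Ideal.mul_mem_right
    have h : (mapRingHom (resHom F)) (X ^ n - 1 : Polynomial (Rq F))
        = (X ^ n - 1 : Polynomial F) := by simp
    rw [h]
    exact Ideal.subset_span rfl)

/-- The natural lift `Q → S` (sending `a ∈ F` to itself and `x ↦ x`). -/
def liftQS (F : Type) [Field F] (n : ℕ) : Qq F n →+* Sq F n :=
  Ideal.Quotient.lift _
    ((Ideal.Quotient.mk _).comp
      (mapRingHom ((Ideal.Quotient.mk _).comp (C : F →+* Polynomial F)))) (by
    intro a ha
    rw [Ideal.mem_span_singleton] at ha
    obtain ⟨c, rfl⟩ := ha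
    rw [RingHom.comp_apply, map_mul, Ideal.Quotient.eq_zero_iff_mem]
    apply Ideal.mul_mem_right
    have h : (mapRingHom ((Ideal.Quotient.mk (Ideal.span ({X ^ 4} : Set (Polynomial F)))).comp
        (C : F →+* Polynomial F))) (X ^ n - 1 : Polynomial F)
        = (X ^ n - 1 : Polynomial (Rq F)) := by simp
    rw [h]
    exact Ideal.subset_span rfl)

/-- The `i`-th torsion code `Tor_i(C) = {μ(g) : uⁱ·g ∈ C}`, as a subset of `Q`. -/
def TorSet (F : Type) [Field F] (n : ℕ) (i : ℕ) (Cc : Ideal (Sq F n)) : Set (Qq F n) :=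
  { a | ∃ g : Sq F n, (uS F n) ^ i * g ∈ Cc ∧ muHom F n g = a }

/-- The code `C` has `i`-th torsional degree `t`, i.e. `Tor_i(C) = ⟨(x−1)^t⟩` with `0 ≤ t ≤ n`. -/
def HasTorDeg (F : Type) [Field F] (n : ℕ) (i : ℕ) (Cc : Ideal (Sq F n)) (t : ℕ) : Prop :=
  t ≤ n ∧ TorSet F n i Cc = ↑(Ideal.span {(xQ F n - 1) ^ t})

/-- An element of `S` that is the lift of a unit of `Q = F[x]/⟨xⁿ−1⟩`. -/
def IsUnitLift (F : Type) [Field F] (n : ℕ) (a : Sq F n) : Prop :=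
  ∃ q : Qq F n, IsUnit q ∧ a = liftQS F n q

/-- An element of `S` that is zero or the lift of a unit of `Q = F[x]/⟨xⁿ−1⟩`. -/
def UnitOrZeroLift (F : Type) [Field F] (n : ℕ) (a : Sq F n) : Prop :=
  a = 0 ∨ IsUnitLift F n a


/-! Writing `z = x - 1`, the ring `S` is `Q[u]/⟨u⁴⟩` and, in characteristic `p`,
`Q = F[x]/⟨(x - 1)^{p^k}⟩ = F[z]/⟨zⁿ⟩`, in which the annihilator of `z^r` is `⟨z^{n-r}⟩`.
Comparing `u`-coefficients in `s · g₁ = u³ b` turns `u³ b ∈ C` into a triangular system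
`a₀ z^{r₁} = 0`, `a₀ z^{k₄} p₄ + a₁ z^{r₁} = 0`, `a₀ z^{k₅} p₅ + a₁ z^{k₄} p₄ + a₂ z^{r₁} = b`.
Solving it from the top with the annihilator description (the second step needs
`n - r₁ + k₄ ≥ r₁`) gives `Tor₃(C) = ⟨z^{τ₁} h̃₁, z^{r₁}⟩`, which is `⟨z^{min r₁ τ₁}⟩` or
`⟨z^{r₁}⟩`; the exponent is then unique because the ideals `⟨z^t⟩`, `t ≤ n`, are pairwise distinct. -/

section PowIdeal

variable {A : Type*} [CommRing A]

theorem le_of_pow_mem_span_singleton_pow {z : A} {n : ℕ} (hz : ∀ t, z ^ t = 0 ↔ n ≤ t)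
    {s t : ℕ} (hs : s ≤ n) (h : z ^ t ∈ Ideal.span {z ^ s}) : s ≤ t := by
  by_contra! hts
  obtain ⟨c, hc⟩ := Ideal.mem_span_singleton'.mp h
  have hne : z ^ (n - 1) ≠ 0 := fun h0 => absurd ((hz _).mp h0) (by omega)
  apply hne
  calc z ^ (n - 1) = z ^ (n - 1 - t) * z ^ t := by rw [← pow_add]; congr 1; omega
    _ = c * z ^ (n - 1 - t + s) := by rw [← hc, pow_add]; ring
    _ = 0 := by rw [(hz _).mpr (by omega), mul_zero]

theorem eq_of_span_singleton_pow_eq {z : A} {n : ℕ} (hz : ∀ t, z ^ t = 0 ↔ n ≤ t) {s t : ℕ}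
    (hs : s ≤ n) (ht : t ≤ n) (h : Ideal.span {z ^ s} = Ideal.span {z ^ t}) : s = t :=
  le_antisymm (le_of_pow_mem_span_singleton_pow hz hs (h ▸ Ideal.mem_span_singleton_self _))
    (le_of_pow_mem_span_singleton_pow hz ht (h.symm ▸ Ideal.mem_span_singleton_self _))

theorem span_pair_pow_mul_unit (z : A) {h : A} (hh : IsUnit h) (r τ : ℕ) :
    Ideal.span {z ^ τ * h, z ^ r} = Ideal.span {z ^ min r τ} := by
  rw [Ideal.span_insert, Ideal.span_singleton_mul_right_unit hh]
  rcases le_total r τ with hrτ | hτr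
  · rw [min_eq_left hrτ, sup_eq_right, Ideal.span_singleton_le_span_singleton]
    exact pow_dvd_pow z hrτ
  · rw [min_eq_right hτr, sup_eq_left, Ideal.span_singleton_le_span_singleton]
    exact pow_dvd_pow z hτr

theorem mem_span_pair_iff_exists_triangular {x y c₂ c₃ e b : A} (hyx : y * x = 0)
    (hann : ∀ a, a * x = 0 → y ∣ a) (he : y * c₂ = e * x) :
    b ∈ Ideal.span {y * c₃ - e * c₂, x} ↔
      ∃ a₀ a₁ a₂ : A, a₀ * x = 0 ∧ a₀ * c₂ + a₁ * x = 0 ∧ a₀ * c₃ + a₁ * c₂ + a₂ * x = b := by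
  rw [Ideal.mem_span_pair]
  constructor
  · rintro ⟨α, β, rfl⟩
    refine ⟨α * y, -(α * e), β, ?_, ?_, ?_⟩
    · rw [mul_assoc, hyx, mul_zero]
    · linear_combination α * he
    · ring
  · rintro ⟨a₀, a₁, a₂, h₀, h₁, rfl⟩
    obtain ⟨α, rfl⟩ := hann a₀ h₀
    obtain ⟨d, hd⟩ := hann (α * e + a₁) (by linear_combination h₁ - α * he)
    exact ⟨α, d * e + a₂, by linear_combination (-c₂) * hd - d * he⟩

end PowIdeal

section PowQuotient

variable {D : Type*} [CommRing D] [IsDomain D] {π f : D} {n : ℕ}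

theorem mk_pow_eq_zero_iff (hπ : π ≠ 0) (hπu : ¬IsUnit π) (hf : f = π ^ n) {t : ℕ} :
    Ideal.Quotient.mk (Ideal.span {f}) π ^ t = 0 ↔ n ≤ t := by
  subst hf
  rw [← map_pow, Ideal.Quotient.eq_zero_iff_mem, Ideal.mem_span_singleton,
    pow_dvd_pow_iff hπ hπu]

theorem mk_pow_dvd_of_mul_mk_pow_eq_zero (hπ : π ≠ 0) (hf : f = π ^ n) {r : ℕ} (hr : r ≤ n)
    {a : D ⧸ Ideal.span {f}} (h : a * Ideal.Quotient.mk _ π ^ r = 0) :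
    Ideal.Quotient.mk _ π ^ (n - r) ∣ a := by
  subst hf
  obtain ⟨a, rfl⟩ := Ideal.Quotient.mk_surjective a
  rw [← map_pow, ← map_mul, Ideal.Quotient.eq_zero_iff_mem, Ideal.mem_span_singleton,
    ← Nat.sub_add_cancel hr, pow_add, mul_dvd_mul_iff_right (pow_ne_zero _ hπ)] at h
  rw [← map_pow]
  exact map_dvd _ h

end PowQuotient

section TruncatedPolynomial

variable {A : Type*} [CommRing A]

open AdjoinRoot

theorem root_X_pow_pow_eq_zero (n : ℕ) : root (X ^ n : A[X]) ^ n = 0 := by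
  rw [← mk_X, ← map_pow, mk_self]

theorem exists_eq_of_add_root_mul (t : AdjoinRoot (X ^ 4 : A[X])) :
    ∃ a₀ a₁ a₂ a₃ : A,
      t = of _ a₀ + root _ * of _ a₁ + root _ ^ 2 * of _ a₂ + root _ ^ 3 * of _ a₃ := by
  obtain ⟨P, rfl⟩ := mk_surjective t
  refine ⟨P.coeff 0, P.coeff 1, P.coeff 2, P.coeff 3, ?_⟩
  simp only [← mk_C, ← mk_X, ← map_pow, ← map_mul, ← map_add]
  rw [mk_eq_mk, X_pow_dvd_iff]
  intro d hd
  interval_cases d <;> simp [coeff_X, coeff_X_pow, coeff_C]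

theorem coeffs_eq_zero_of_of_add_root_mul_eq_zero {a₀ a₁ a₂ a₃ : A}
    (h : of _ a₀ + root _ * of _ a₁ + root _ ^ 2 * of _ a₂ + root _ ^ 3 * of _ a₃
      = (0 : AdjoinRoot (X ^ 4 : A[X]))) :
    a₀ = 0 ∧ a₁ = 0 ∧ a₂ = 0 ∧ a₃ = 0 := by
  simp only [← mk_C, ← mk_X, ← map_pow, ← map_mul, ← map_add] at h
  rw [mk_eq_zero, X_pow_dvd_iff] at h
  refine ⟨?_, ?_, ?_, ?_⟩
  · simpa [coeff_X, coeff_X_pow, coeff_C] using h 0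
  · simpa [coeff_X, coeff_X_pow, coeff_C] using h 1
  · simpa [coeff_X, coeff_X_pow, coeff_C] using h 2
  · simpa [coeff_X, coeff_X_pow, coeff_C] using h 3

end TruncatedPolynomial

section ChainRing

variable {F : Type} [Field F] {n : ℕ}

open AdjoinRoot

theorem xQ_pow_eq_one : xQ F n ^ n = 1 := by
  rw [xQ, ← map_pow, ← sub_eq_zero, ← map_one (Ideal.Quotient.mk _), ← map_sub,
    Ideal.Quotient.eq_zero_iff_mem]
  exact Ideal.mem_span_singleton_self _

theorem uS_pow_four : uS F n ^ 4 = 0 := by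
  have h : uu F ^ 4 = 0 := root_X_pow_pow_eq_zero 4
  rw [uS, ← map_pow, ← map_pow, h, map_zero, map_zero]

theorem muHom_liftQS (q : Qq F n) : muHom F n (liftQS F n q) = q := by
  suffices h : (muHom F n).comp (liftQS F n) = RingHom.id _ from RingHom.congr_fun h q
  ext c
  · simp [muHom, liftQS, resHom]
  · simp [muHom, liftQS]

theorem muHom_uS : muHom F n (uS F n) = 0 := by
  simp [muHom, uS, resHom, uu]

theorem muHom_xS : muHom F n (xS F n) = xQ F n := by
  simp [muHom, xS, xQ]

theorem liftQS_xQ : liftQS F n (xQ F n) = xS F n := by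
  simp [liftQS, xQ, xS]

/-- `Q[u]/⟨u⁴⟩`, where the `u`-adic coefficients of an element of `S` can be read off. -/
abbrev Tq (F : Type) [Field F] (n : ℕ) : Type := AdjoinRoot (X ^ 4 : (Qq F n)[X])

def rqToTq (F : Type) [Field F] (n : ℕ) : Rq F →+* Tq F n :=
  lift ((of _).comp ((Ideal.Quotient.mk _).comp C)) (root _)
    (by simpa using root_X_pow_pow_eq_zero 4)

def sqToTq (F : Type) [Field F] (n : ℕ) : Sq F n →+* Tq F n :=
  lift (rqToTq F n) (of _ (xQ F n)) (by simp [← map_pow, xQ_pow_eq_one])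

def tqToSq (F : Type) [Field F] (n : ℕ) : Tq F n →+* Sq F n :=
  lift (liftQS F n) (uS F n) (by simp [uS_pow_four])

theorem rqToTq_mk_C (c : F) :
    rqToTq F n (Ideal.Quotient.mk _ (C c)) = of _ (Ideal.Quotient.mk _ (C c)) := lift_of _

theorem rqToTq_mk_X : rqToTq F n (Ideal.Quotient.mk _ X) = root _ := lift_root _

theorem sqToTq_mk_C (r : Rq F) : sqToTq F n (Ideal.Quotient.mk _ (C r)) = rqToTq F n r :=
  lift_of _

theorem sqToTq_mk_X : sqToTq F n (Ideal.Quotient.mk _ X) = of _ (xQ F n) := lift_root _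

theorem tqToSq_of (q : Qq F n) : tqToSq F n (of _ q) = liftQS F n q := lift_of _

theorem tqToSq_root : tqToSq F n (root _) = uS F n := lift_root _

theorem sqToTq_uS : sqToTq F n (uS F n) = root _ := by
  rw [uS, uu, sqToTq_mk_C, rqToTq_mk_X]

theorem sqToTq_liftQS (q : Qq F n) : sqToTq F n (liftQS F n q) = of _ q := by
  suffices h : (sqToTq F n).comp (liftQS F n) = of _ from RingHom.congr_fun h q
  ext c
  · simp [liftQS, sqToTq_mk_C, rqToTq_mk_C]
  · simp [liftQS, sqToTq_mk_X, xQ]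

theorem tqToSq_sqToTq (s : Sq F n) : tqToSq F n (sqToTq F n s) = s := by
  suffices h : (tqToSq F n).comp (sqToTq F n) = RingHom.id _ from RingHom.congr_fun h s
  ext c
  · simp [sqToTq_mk_C, rqToTq_mk_C, tqToSq_of, liftQS]
  · simp [sqToTq_mk_C, rqToTq_mk_X, tqToSq_root, uS, uu]
  · simp [sqToTq_mk_X, tqToSq_of, liftQS_xQ, xS]

theorem exists_eq_liftQS_add_uS_mul (s : Sq F n) :
    ∃ a₀ a₁ a₂ a₃ : Qq F n, s = liftQS F n a₀ + uS F n * liftQS F n a₁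
      + uS F n ^ 2 * liftQS F n a₂ + uS F n ^ 3 * liftQS F n a₃ := by
  obtain ⟨a₀, a₁, a₂, a₃, h⟩ := exists_eq_of_add_root_mul (sqToTq F n s)
  refine ⟨a₀, a₁, a₂, a₃, ?_⟩
  rw [← tqToSq_sqToTq s, h]
  simp only [map_add, map_mul, map_pow, tqToSq_of, tqToSq_root]

theorem coeffs_eq_zero_of_liftQS_add_uS_mul_eq_zero {a₀ a₁ a₂ a₃ : Qq F n}
    (h : liftQS F n a₀ + uS F n * liftQS F n a₁ + uS F n ^ 2 * liftQS F n a₂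
      + uS F n ^ 3 * liftQS F n a₃ = 0) :
    a₀ = 0 ∧ a₁ = 0 ∧ a₂ = 0 ∧ a₃ = 0 := by
  apply coeffs_eq_zero_of_of_add_root_mul_eq_zero
  simpa only [map_add, map_mul, map_pow, map_zero, sqToTq_liftQS, sqToTq_uS]
    using congrArg (sqToTq F n) h

theorem uS_pow_three_mul_eq (s : Sq F n) :
    uS F n ^ 3 * s = uS F n ^ 3 * liftQS F n (muHom F n s) := by
  obtain ⟨a₀, a₁, a₂, a₃, rfl⟩ := exists_eq_liftQS_add_uS_mul s
  set u := uS F n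
  set L := liftQS F n
  have hμ : muHom F n (L a₀ + u * L a₁ + u ^ 2 * L a₂ + u ^ 3 * L a₃) = a₀ := by
    simp [u, L, muHom_liftQS, muHom_uS]
  rw [hμ]
  linear_combination (L a₁ + u * L a₂ + u ^ 2 * L a₃) * (uS_pow_four : u ^ 4 = 0)

theorem uS_pow_three_mul_liftQS_injective :
    Function.Injective fun a : Qq F n => uS F n ^ 3 * liftQS F n a := by
  intro a b h
  have := coeffs_eq_zero_of_liftQS_add_uS_mul_eq_zero (a₀ := 0) (a₁ := 0) (a₂ := 0) (a₃ := a - b)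
    (by simp only [map_zero, map_sub]; linear_combination h)
  exact sub_eq_zero.mp this.2.2.2

theorem mem_torSet_three_iff {Cc : Ideal (Sq F n)} {b : Qq F n} :
    b ∈ TorSet F n 3 Cc ↔ uS F n ^ 3 * liftQS F n b ∈ Cc := by
  constructor
  · rintro ⟨g, hg, rfl⟩
    rwa [← uS_pow_three_mul_eq]
  · exact fun h => ⟨_, h, muHom_liftQS b⟩

theorem uS_pow_three_mul_liftQS_mem_span_iff (c₁ c₂ c₃ b : Qq F n) :
    uS F n ^ 3 * liftQS F n b ∈ Ideal.span {uS F n * liftQS F n c₁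
      + uS F n ^ 2 * liftQS F n c₂ + uS F n ^ 3 * liftQS F n c₃} ↔
      ∃ a₀ a₁ a₂ : Qq F n,
        a₀ * c₁ = 0 ∧ a₀ * c₂ + a₁ * c₁ = 0 ∧ a₀ * c₃ + a₁ * c₂ + a₂ * c₁ = b := by
  set u := uS F n
  set L := liftQS F n
  have hu : u ^ 4 = 0 := uS_pow_four
  rw [Ideal.mem_span_singleton']
  constructor
  · rintro ⟨s, hs⟩
    obtain ⟨a₀, a₁, a₂, a₃, rfl⟩ := exists_eq_liftQS_add_uS_mul s
    obtain ⟨-, h₁, h₂, h₃⟩ := coeffs_eq_zero_of_liftQS_add_uS_mul_eq_zero (a₀ := 0)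
      (a₁ := a₀ * c₁) (a₂ := a₀ * c₂ + a₁ * c₁) (a₃ := a₀ * c₃ + a₁ * c₂ + a₂ * c₁ - b) (by
        simp only [map_zero, map_add, map_mul, map_sub]
        linear_combination hs - (L a₁ * L c₃ + L a₂ * L c₂ + L a₃ * L c₁
          + u * (L a₂ * L c₃ + L a₃ * L c₂) + u ^ 2 * (L a₃ * L c₃)) * hu)
    exact ⟨a₀, a₁, a₂, h₁, h₂, sub_eq_zero.mp h₃⟩
  · rintro ⟨a₀, a₁, a₂, h₁, h₂, rfl⟩
    refine ⟨L a₀ + u * L a₁ + u ^ 2 * L a₂, ?_⟩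
    have h₁' := congrArg L h₁
    have h₂' := congrArg L h₂
    simp only [map_zero, map_add, map_mul] at h₁' h₂' ⊢
    linear_combination u * h₁' + u ^ 2 * h₂' + (L a₁ * L c₃ + L a₂ * L c₂ + u * L a₂ * L c₃) * hu

theorem liftQS_muHom_of_unitOrZeroLift {a : Sq F n}
    (h : UnitOrZeroLift F n a) : liftQS F n (muHom F n a) = a := by
  rcases h with rfl | ⟨q, -, rfl⟩
  · rw [map_zero, map_zero]
  · rw [muHom_liftQS]

end ChainRing

section CyclicQuotient

variable {F : Type} [Field F] {p : ℕ} [ExpChar F p] {k : ℕ}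

theorem X_pow_sub_one_eq_X_sub_one_pow : (X ^ p ^ k - 1 : F[X]) = (X - C 1) ^ p ^ k := by
  rw [sub_pow_expChar_pow, ← C_pow, one_pow, C_1]

theorem xQ_sub_one_eq_mk (n : ℕ) : xQ F n - 1 = Ideal.Quotient.mk _ (X - C 1) := by
  rw [xQ, map_sub, C_1, map_one]

theorem xQ_sub_one_pow_eq_zero_iff {t : ℕ} : (xQ F (p ^ k) - 1) ^ t = 0 ↔ p ^ k ≤ t := by
  rw [xQ_sub_one_eq_mk]
  exact mk_pow_eq_zero_iff (X_sub_C_ne_zero 1) (not_isUnit_X_sub_C 1)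
    X_pow_sub_one_eq_X_sub_one_pow

theorem xQ_sub_one_pow_dvd_of_mul_eq_zero {r : ℕ} (hr : r ≤ p ^ k) {a : Qq F (p ^ k)}
    (h : a * (xQ F (p ^ k) - 1) ^ r = 0) : (xQ F (p ^ k) - 1) ^ (p ^ k - r) ∣ a := by
  rw [xQ_sub_one_eq_mk] at h ⊢
  exact mk_pow_dvd_of_mul_mk_pow_eq_zero (X_sub_C_ne_zero 1) X_pow_sub_one_eq_X_sub_one_pow hr h

theorem torSet_three_span_liftQS_eq {r k₄ k₅ τ : ℕ} (hr : r ≤ p ^ k) (hcase : r ≤ p ^ k - r + k₄)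
    {q₄ q₅ q : Qq F (p ^ k)}
    (heq : (xQ F (p ^ k) - 1) ^ (p ^ k - r + k₄ - r + k₄) * q₄ ^ 2
      - (xQ F (p ^ k) - 1) ^ (p ^ k - r + k₅) * q₅ = (xQ F (p ^ k) - 1) ^ τ * q) :
    TorSet F (p ^ k) 3 (Ideal.span {uS F (p ^ k) * liftQS F (p ^ k) ((xQ F (p ^ k) - 1) ^ r)
      + uS F (p ^ k) ^ 2 * liftQS F (p ^ k) ((xQ F (p ^ k) - 1) ^ k₄ * q₄)
      + uS F (p ^ k) ^ 3 * liftQS F (p ^ k) ((xQ F (p ^ k) - 1) ^ k₅ * q₅)})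
      = Ideal.span {(xQ F (p ^ k) - 1) ^ τ * q, (xQ F (p ^ k) - 1) ^ r} := by
  set z := xQ F (p ^ k) - 1
  set w := p ^ k - r + k₄ - r
  have hyx : z ^ (p ^ k - r) * z ^ r = 0 := by
    rw [← pow_add, Nat.sub_add_cancel hr, xQ_sub_one_pow_eq_zero_iff]
  have he : z ^ (p ^ k - r) * (z ^ k₄ * q₄) = q₄ * z ^ w * z ^ r := by
    rw [← mul_assoc, ← pow_add, show p ^ k - r + k₄ = w + r by omega, pow_add]
    ring
  have hD : z ^ (p ^ k - r) * (z ^ k₅ * q₅) - q₄ * z ^ w * (z ^ k₄ * q₄) = -(z ^ τ * q) := by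
    rw [← heq]
    ring
  ext b
  rw [mem_torSet_three_iff, uS_pow_three_mul_liftQS_mem_span_iff, SetLike.mem_coe,
    ← mem_span_pair_iff_exists_triangular hyx (fun a ha => xQ_sub_one_pow_dvd_of_mul_eq_zero hr ha)
      he, hD, Ideal.span_insert, Ideal.span_singleton_neg, ← Ideal.span_insert]

theorem torSet_three_eq_span_pair {r k₄ k₅ τ : ℕ} (hr : r ≤ p ^ k)
    (hcase : r ≤ p ^ k - r + k₄) {p₄ p₅ h₁ : Sq F (p ^ k)} (hp₄ : UnitOrZeroLift F (p ^ k) p₄)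
    {Cc : Ideal (Sq F (p ^ k))}
    (hC : Cc = Ideal.span {uS F (p ^ k) * (xS F (p ^ k) - 1) ^ r
      + uS F (p ^ k) ^ 2 * (xS F (p ^ k) - 1) ^ k₄ * p₄
      + uS F (p ^ k) ^ 3 * (xS F (p ^ k) - 1) ^ k₅ * p₅})
    (heq : uS F (p ^ k) ^ 3 * ((xS F (p ^ k) - 1) ^ (p ^ k - r + k₄ - r + k₄) * p₄ ^ 2
      - (xS F (p ^ k) - 1) ^ (p ^ k - r + k₅) * p₅)
      = uS F (p ^ k) ^ 3 * (xS F (p ^ k) - 1) ^ τ * h₁) :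
    TorSet F (p ^ k) 3 Cc
      = Ideal.span {(xQ F (p ^ k) - 1) ^ τ * muHom F (p ^ k) h₁, (xQ F (p ^ k) - 1) ^ r} := by
  set z := xQ F (p ^ k) - 1
  have hLz : liftQS F (p ^ k) z = xS F (p ^ k) - 1 := by rw [map_sub, map_one, liftQS_xQ]
  have hμz : muHom F (p ^ k) (xS F (p ^ k) - 1) = z := by rw [map_sub, map_one, muHom_xS]
  obtain ⟨q₄, rfl⟩ : ∃ q, liftQS F (p ^ k) q = p₄ := ⟨_, liftQS_muHom_of_unitOrZeroLift hp₄⟩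
  have hgen : Cc = Ideal.span {uS F (p ^ k) * liftQS F (p ^ k) (z ^ r)
      + uS F (p ^ k) ^ 2 * liftQS F (p ^ k) (z ^ k₄ * q₄)
      + uS F (p ^ k) ^ 3 * liftQS F (p ^ k) (z ^ k₅ * muHom F (p ^ k) p₅)} := by
    rw [hC, mul_assoc (uS F (p ^ k) ^ 3), uS_pow_three_mul_eq, map_mul, map_pow, hμz]
    simp only [map_mul, map_pow, hLz, mul_assoc]
  have heqQ : z ^ (p ^ k - r + k₄ - r + k₄) * q₄ ^ 2
      - z ^ (p ^ k - r + k₅) * muHom F (p ^ k) p₅ = z ^ τ * muHom F (p ^ k) h₁ := by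
    rw [mul_assoc, uS_pow_three_mul_eq, uS_pow_three_mul_eq (_ * h₁)] at heq
    simpa only [map_sub, map_mul, map_pow, hμz, muHom_liftQS]
      using uS_pow_three_mul_liftQS_injective heq
  rw [hgen, torSet_three_span_liftQS_eq hr hcase heqQ]

end CyclicQuotient

theorem stmt_4_general (p m k : ℕ) (hp : Nat.Prime p)
    (F : Type) [Field F] [Fintype F] (hF : Fintype.card F = p ^ m)
    (r₁ k₄ k₅ : ℕ) (hr₁ : r₁ < p ^ k)
    (p₄ p₅ : Sq F (p ^ k))
    (hp₄ : UnitOrZeroLift F (p ^ k) p₄)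
    (C : Ideal (Sq F (p ^ k)))
    (hC : C = Ideal.span
      { uS F (p ^ k) * (xS F (p ^ k) - 1) ^ r₁
          + uS F (p ^ k) ^ 2 * (xS F (p ^ k) - 1) ^ k₄ * p₄
          + uS F (p ^ k) ^ 3 * (xS F (p ^ k) - 1) ^ k₅ * p₅ })
    (hcase : r₁ ≤ p ^ k - r₁ + k₄)
    (τ₁ : ℕ) (h₁ : Sq F (p ^ k))
    (heq : uS F (p ^ k) ^ 3 * ((xS F (p ^ k) - 1) ^ (p ^ k - r₁ + k₄ - r₁ + k₄) * p₄ ^ 2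
        - (xS F (p ^ k) - 1) ^ (p ^ k - r₁ + k₅) * p₅)
      = uS F (p ^ k) ^ 3 * (xS F (p ^ k) - 1) ^ τ₁ * h₁)
    (t₃ : ℕ) (ht₃ : HasTorDeg F (p ^ k) 3 C t₃) :
    (IsUnitLift F (p ^ k) h₁ → t₃ = min r₁ τ₁) ∧ (h₁ = 0 → t₃ = r₁) := by
  have : Fact p.Prime := ⟨hp⟩
  have : CharP F p := charP_of_card_eq_prime_pow hF
  have : ExpChar F p := ExpChar.prime hp
  obtain ⟨ht₃n, ht₃⟩ := ht₃
  set z := xQ F (p ^ k) - 1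
  have hspan : Ideal.span {z ^ t₃} = Ideal.span {z ^ τ₁ * muHom F (p ^ k) h₁, z ^ r₁} :=
    SetLike.coe_injective (ht₃.symm.trans (torSet_three_eq_span_pair hr₁.le hcase hp₄ hC heq))
  have hz : ∀ t, z ^ t = 0 ↔ p ^ k ≤ t := fun _ => xQ_sub_one_pow_eq_zero_iff
  refine ⟨?_, ?_⟩
  · rintro ⟨q, hq, rfl⟩
    rw [muHom_liftQS, span_pair_pow_mul_unit z hq] at hspan
    exact eq_of_span_singleton_pow_eq hz ht₃n (by omega) hspan
  · rintro rfl
    rw [map_zero, mul_zero, Ideal.span_insert_zero] at hspan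
    exact eq_of_span_singleton_pow_eq hz ht₃n hr₁.le hspan

/-- third torsional degree of `C = ⟨g₁⟩` in the case `n − r₁ + k₄ ≥ r₁`. -/
theorem stmt_4 (p m k : ℕ) (hp : Nat.Prime p) (hm : 1 ≤ m) (hk : 1 ≤ k)
    (F : Type) [Field F] [Fintype F] (hF : Fintype.card F = p ^ m)
    (r₁ k₄ k₅ : ℕ) (hk₄ : k₄ < r₁) (hk₅ : k₅ < r₁) (hr₁ : r₁ < p ^ k)
    (p₄ p₅ : Sq F (p ^ k))
    (hp₄ : UnitOrZeroLift F (p ^ k) p₄) (hp₅ : UnitOrZeroLift F (p ^ k) p₅)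
    (C : Ideal (Sq F (p ^ k)))
    (hC : C = Ideal.span
      { uS F (p ^ k) * (xS F (p ^ k) - 1) ^ r₁
          + uS F (p ^ k) ^ 2 * (xS F (p ^ k) - 1) ^ k₄ * p₄
          + uS F (p ^ k) ^ 3 * (xS F (p ^ k) - 1) ^ k₅ * p₅ })
    (hcase : r₁ ≤ p ^ k - r₁ + k₄)
    (τ₁ : ℕ) (h₁ : Sq F (p ^ k)) (hh₁ : UnitOrZeroLift F (p ^ k) h₁)
    (heq : uS F (p ^ k) ^ 3 * ((xS F (p ^ k) - 1) ^ (p ^ k - r₁ + k₄ - r₁ + k₄) * p₄ ^ 2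
        - (xS F (p ^ k) - 1) ^ (p ^ k - r₁ + k₅) * p₅)
      = uS F (p ^ k) ^ 3 * (xS F (p ^ k) - 1) ^ τ₁ * h₁)
    (t₃ : ℕ) (ht₃ : HasTorDeg F (p ^ k) 3 C t₃) :
    (IsUnitLift F (p ^ k) h₁ → t₃ = min r₁ τ₁) ∧ (h₁ = 0 → t₃ = r₁) :=
  stmt_4_general p m k hp F hF r₁ k₄ k₅ hr₁ p₄ p₅ hp₄ C hC hcase τ₁ h₁ heq t₃ ht₃

end
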